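/- arXiv:2103.13988 — 5 statements merged into one kernel-verified Lean document; each statement's English description precedes it below -/
import Mathlib

section
/- Let α₂ ≥ α₁ > 0, μ > 0, c_T ∈ (0,1), and ℓ_T, ℓ_g, ℓ_x > 0 be constants, and let P be a symmetric positive definite matrix with largest eigenvalue λmax(P), smallest eigenvalue λmin(P), and condition number κ(P) = λmax(P)/λmin(P). For a sampling period τ > 0 and relaxation parameter ε, define c_W := √(α₂/α₁)·e^{-τμ/2}, ℓ_W := √α₁·ℓ_x, and the 2×2 matrix M := [[1 − ε(1 − c_T), (λmax(P)·ℓ_T·ℓ_g/√α₁)·ε·c_W], [λmin(P)^{-1}·(1 + c_T)·ε·ℓ_W·c_W, (1 + (ℓ_W·ℓ_T·ℓ_g/√α₁)·ε·c_W)·c_W]]. If τ > log(α₂/α₁)/μ and 0 < ε ≤ 1 with ε < ε̄(τ) := e^{τμ/2}·(e^{τμ/2} − √(α₂/α₁)) / (ℓ_g·ℓ_x·ℓ_T·(1 + κ(P)·(1 + c_T)/(1 − c_T))·(α₂/α₁)), then the spectral radius of M satisfies ρ(M) < 1. -/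
/-! Write `M = !![a, b; c, d]`. Its entries are nonnegative, and `a < 1` together with
`b c < (1 - a)(1 - d)` is enough for `ρ(M) < 1`: conjugating by `diag(1, t)` for a suitable
`t > 0` makes both row sums less than one, and the `ℓ∞` operator norm bounds the spectral
radius. With `c_W = √(α₂/α₁) e^{-τμ/2}`, the bound `ε < ε̄(τ)` says exactly that
`ε ℓ_g ℓ_x ℓ_T (1 + κ(P)(1 + c_T)/(1 - c_T)) c_W² < 1 - c_W`, and this is the condition
`b c < (1 - a)(1 - d)` with a factor `ε (1 - c_T)` taken out. -/

open scoped ENNReal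

/-- Spectral radius of a real matrix: supremum of `‖λ‖` over the complex spectrum. -/
noncomputable def specRad {n : ℕ} (M : Matrix (Fin n) (Fin n) ℝ) : ℝ≥0∞ :=
  spectralRadius ℂ (M.map (algebraMap ℝ ℂ))

/-- Largest eigenvalue of a Hermitian (symmetric) real matrix. -/
noncomputable def eigMax {n : ℕ} {P : Matrix (Fin n) (Fin n) ℝ} (hP : P.IsHermitian) : ℝ :=
  ⨆ i, hP.eigenvalues i

/-- Smallest eigenvalue of a Hermitian (symmetric) real matrix. -/
noncomputable def eigMin {n : ℕ} {P : Matrix (Fin n) (Fin n) ℝ} (hP : P.IsHermitian) : ℝ :=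
  ⨅ i, hP.eigenvalues i

section SpectralRadius

variable {n : ℕ}

theorem specRad_units_conj (U : (Matrix (Fin n) (Fin n) ℝ)ˣ) (M : Matrix (Fin n) (Fin n) ℝ) :
    specRad ((U : Matrix (Fin n) (Fin n) ℝ) * M * (↑U⁻¹ : Matrix (Fin n) (Fin n) ℝ)) =
      specRad M := by
  let f : Matrix (Fin n) (Fin n) ℝ →* Matrix (Fin n) (Fin n) ℂ :=
    ((algebraMap ℝ ℂ).mapMatrix (m := Fin n)).toMonoidHom
  have hmap : ((U : Matrix (Fin n) (Fin n) ℝ) * M * (↑U⁻¹ : Matrix (Fin n) (Fin n) ℝ)).map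
      (algebraMap ℝ ℂ) = (Units.map f U : Matrix (Fin n) (Fin n) ℂ) * M.map (algebraMap ℝ ℂ) *
        (↑(Units.map f U)⁻¹ : Matrix (Fin n) (Fin n) ℂ) := by
    show f _ = _
    simp only [map_mul, Units.coe_map, Units.coe_map_inv]
    rfl
  simp only [specRad, spectralRadius, hmap, spectrum.units_conjugate]

attribute [local instance] Matrix.linftyOpNormedRing Matrix.linftyOpNormedAlgebra in
theorem specRad_lt_one_of_sum_abs_lt_one [NeZero n] (M : Matrix (Fin n) (Fin n) ℝ)
    (h : ∀ i, ∑ j, |M i j| < 1) : specRad M < 1 := by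
  refine (spectrum.spectralRadius_le_nnnorm (𝕜 := ℂ) _).trans_lt ?_
  rw [Matrix.linfty_opNNNorm_def, ENNReal.coe_lt_one_iff, Finset.sup_lt_iff zero_lt_one]
  intro i _
  rw [← NNReal.coe_lt_coe]
  simpa [Complex.norm_real] using h i

end SpectralRadius

theorem specRad_fin_two_rescale (a b c d : ℝ) {t : ℝ} (ht : t ≠ 0) :
    specRad !![a, b / t; c * t, d] = specRad !![a, b; c, d] := by
  have hv : IsUnit ![(1 : ℝ), t] := Pi.isUnit_iff.2 (Fin.forall_fin_two.2 ⟨isUnit_one, ht.isUnit⟩)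
  obtain ⟨U, hU⟩ := Matrix.isUnit_diagonal.2 hv
  rw [← specRad_units_conj U !![a, b; c, d], Matrix.coe_units_inv, hU, Matrix.inv_diagonal,
    Ring.inverse_of_isUnit hv]
  congr 1
  ext i j
  fin_cases i <;> fin_cases j <;> simp [div_eq_mul_inv, mul_comm, mul_inv_cancel_right₀ ht]

theorem specRad_fin_two_lt_one {a b c d : ℝ} (ha : 0 ≤ a) (hb : 0 ≤ b) (hc : 0 < c) (hd : 0 ≤ d)
    (ha1 : a < 1) (hbc : b * c < (1 - a) * (1 - d)) : specRad !![a, b; c, d] < 1 := by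
  have h1a : 0 < 1 - a := sub_pos.2 ha1
  have h1d : 0 < 1 - d := pos_of_mul_pos_right ((mul_nonneg hb hc.le).trans_lt hbc) h1a.le
  obtain ⟨t, hbt, htc⟩ : ∃ t, b / (1 - a) < t ∧ t < (1 - d) / c :=
    exists_between (by rw [div_lt_div_iff₀ h1a hc]; linarith)
  have ht : 0 < t := (div_nonneg hb h1a.le).trans_lt hbt
  rw [← specRad_fin_two_rescale a b c d ht.ne']
  refine specRad_lt_one_of_sum_abs_lt_one _ (Fin.forall_fin_two.2 ⟨?_, ?_⟩)
  · have hrow : b / t < 1 - a := by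
      rw [div_lt_iff₀ ht]
      rw [div_lt_iff₀ h1a] at hbt
      linarith
    simp [Fin.sum_univ_two, abs_of_nonneg, ha, hb, ht.le, div_nonneg]
    linarith
  · have hrow : c * t < 1 - d := by rwa [lt_div_iff₀' hc] at htc
    simp [Fin.sum_univ_two, abs_of_nonneg, hd, hc.le, ht.le]
    linarith

theorem specRad_comparison_lt_one {δ ε w L p q : ℝ} (hδ : 0 < δ) (hε : 0 < ε) (hεδ : ε * δ ≤ 1)
    (hw : 0 < w) (hL : 0 ≤ L) (hp : 0 ≤ p) (hq : 0 < q)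
    (h : ε * (L + p * q / δ) * w ^ 2 < 1 - w) :
    specRad !![1 - ε * δ, p * ε * w; q * ε * w, (1 + L * ε * w) * w] < 1 := by
  have hδ' : ε * (L * δ + p * q) * w ^ 2 < δ * (1 - w) := by
    calc ε * (L * δ + p * q) * w ^ 2 = ε * (L + p * q / δ) * w ^ 2 * δ := by field_simp
      _ < (1 - w) * δ := mul_lt_mul_of_pos_right h hδ
      _ = δ * (1 - w) := mul_comm _ _
  apply specRad_fin_two_lt_one (sub_nonneg.2 hεδ) (by positivity) (by positivity) (by positivity)
    (sub_lt_self 1 (mul_pos hε hδ))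
  nlinarith [mul_lt_mul_of_pos_left hδ' hε]

theorem Matrix.PosDef.eigMin_pos {n : ℕ} [NeZero n] {P : Matrix (Fin n) (Fin n) ℝ}
    (hP : P.PosDef) : 0 < eigMin hP.1 := by
  obtain ⟨i, hi⟩ := exists_eq_ciInf_of_finite (f := hP.1.eigenvalues)
  rw [eigMin, ← hi]
  exact hP.eigenvalues_pos i

theorem Matrix.PosDef.eigMax_pos {n : ℕ} [NeZero n] {P : Matrix (Fin n) (Fin n) ℝ}
    (hP : P.PosDef) : 0 < eigMax hP.1 := by
  obtain ⟨i, hi⟩ := exists_eq_ciSup_of_finite (f := hP.1.eigenvalues)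
  rw [eigMax, ← hi]
  exact hP.eigenvalues_pos i

theorem Real.mul_sq_sqrt_mul_exp_neg_half_lt {r y ε D : ℝ} (hr : 0 < r) (hD : 0 < D)
    (h : ε < exp (y / 2) * (exp (y / 2) - √r) / (D * r)) :
    ε * D * (√r * exp (-y / 2)) ^ 2 < 1 - √r * exp (-y / 2) := by
  have hexp : exp (y / 2) * exp (-y / 2) = 1 := by rw [← exp_add]; ring_nf; exact exp_zero
  rw [lt_div_iff₀ (by positivity)] at h
  calc ε * D * (√r * exp (-y / 2)) ^ 2 = ε * (D * r) * exp (-y / 2) ^ 2 := by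
        rw [mul_pow, sq_sqrt hr.le]; ring
    _ < exp (y / 2) * (exp (y / 2) - √r) * exp (-y / 2) ^ 2 :=
        mul_lt_mul_of_pos_right h (by positivity)
    _ = 1 - √r * exp (-y / 2) := by
        linear_combination (1 + exp (y / 2) * exp (-y / 2) - √r * exp (-y / 2)) * hexp

theorem stmt0_general {nu : ℕ} (hnu : 0 < nu)
    (P : Matrix (Fin nu) (Fin nu) ℝ) (hP : P.PosDef)
    (α₁ α₂ μ cT ℓT ℓg ℓx τ ε : ℝ)
    (hα₁ : 0 < α₁) (hα : α₁ ≤ α₂)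
    (hcT : cT ∈ Set.Ioo (0:ℝ) 1) (hℓT : 0 < ℓT) (hℓg : 0 < ℓg) (hℓx : 0 < ℓx)
    (hε0 : 0 < ε) (hε1 : ε ≤ 1)
    (hεbar : ε < Real.exp (τ*μ/2) * (Real.exp (τ*μ/2) - Real.sqrt (α₂/α₁)) /
      (ℓg * ℓx * ℓT * (1 + (eigMax hP.1 / eigMin hP.1) * (1 + cT) / (1 - cT)) * (α₂/α₁))) :
    specRad
      !![1 - ε*(1 - cT),
         (eigMax hP.1 * ℓT * ℓg / Real.sqrt α₁) * ε * (Real.sqrt (α₂/α₁) * Real.exp (-(τ*μ)/2));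
         (eigMin hP.1)⁻¹ * (1 + cT) * ε * (Real.sqrt α₁ * ℓx) *
           (Real.sqrt (α₂/α₁) * Real.exp (-(τ*μ)/2)),
         (1 + ((Real.sqrt α₁ * ℓx) * ℓT * ℓg / Real.sqrt α₁) * ε *
             (Real.sqrt (α₂/α₁) * Real.exp (-(τ*μ)/2))) *
           (Real.sqrt (α₂/α₁) * Real.exp (-(τ*μ)/2))]
      < 1 := by
  have : NeZero nu := ⟨hnu.ne'⟩
  obtain ⟨hcT0, hcT1⟩ := hcT
  have h1cT : 0 < 1 - cT := sub_pos.2 hcT1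
  have hr : 0 < α₂ / α₁ := div_pos (hα₁.trans_le hα) hα₁
  have hsqrt : 0 < Real.sqrt α₁ := Real.sqrt_pos.2 hα₁
  have hm := hP.eigMin_pos
  have hM := hP.eigMax_pos
  have hw : 0 < Real.sqrt (α₂/α₁) * Real.exp (-(τ*μ)/2) := by positivity
  have hεw := Real.mul_sq_sqrt_mul_exp_neg_half_lt hr (by positivity) hεbar
  refine (specRad_comparison_lt_one (L := Real.sqrt α₁ * ℓx * ℓT * ℓg / Real.sqrt α₁)
    (p := eigMax hP.1 * ℓT * ℓg / Real.sqrt α₁)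
    (q := (eigMin hP.1)⁻¹ * (1 + cT) * (Real.sqrt α₁ * ℓx))
    h1cT hε0 (mul_le_one₀ hε1 h1cT.le (by linarith)) hw (by positivity) (by positivity)
    (by positivity) ?_).trans_eq' ?_
  · convert hεw using 3
    field_simp
  · rw [mul_right_comm _ ε (Real.sqrt α₁ * ℓx)]

/-- **Lemma 2** (parameter selection): under the stated bounds on the sampling period `τ`
and relaxation parameter `ε`, the comparison matrix `M` has spectral radius less than one. -/
theorem stmt0 {nu : ℕ} (hnu : 0 < nu)
    (P : Matrix (Fin nu) (Fin nu) ℝ) (hP : P.PosDef)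
    (α₁ α₂ μ cT ℓT ℓg ℓx τ ε : ℝ)
    (hα₁ : 0 < α₁) (hα : α₁ ≤ α₂) (hμ : 0 < μ)
    (hcT : cT ∈ Set.Ioo (0:ℝ) 1) (hℓT : 0 < ℓT) (hℓg : 0 < ℓg) (hℓx : 0 < ℓx)
    (hτ0 : 0 < τ) (hτ : Real.log (α₂ / α₁) / μ < τ)
    (hε0 : 0 < ε) (hε1 : ε ≤ 1)
    (hεbar : ε < Real.exp (τ*μ/2) * (Real.exp (τ*μ/2) - Real.sqrt (α₂/α₁)) /
      (ℓg * ℓx * ℓT * (1 + (eigMax hP.1 / eigMin hP.1) * (1 + cT) / (1 - cT)) * (α₂/α₁))) :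
    specRad
      !![1 - ε*(1 - cT),
         (eigMax hP.1 * ℓT * ℓg / Real.sqrt α₁) * ε * (Real.sqrt (α₂/α₁) * Real.exp (-(τ*μ)/2));
         (eigMin hP.1)⁻¹ * (1 + cT) * ε * (Real.sqrt α₁ * ℓx) *
           (Real.sqrt (α₂/α₁) * Real.exp (-(τ*μ)/2)),
         (1 + ((Real.sqrt α₁ * ℓx) * ℓT * ℓg / Real.sqrt α₁) * ε *
             (Real.sqrt (α₂/α₁) * Real.exp (-(τ*μ)/2))) *
           (Real.sqrt (α₂/α₁) * Real.exp (-(τ*μ)/2))]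
      < 1 :=
  stmt0_general hnu P hP α₁ α₂ μ cT ℓT ℓg ℓx τ ε hα₁ hα hcT hℓT hℓg hℓx hε0 hε1 hεbar
end

section
/- Let α₂ ≥ α₁ > 0, μ > 0, τ > 0, ℓ_x > 0, let U ⊆ ℝ^{n_u} and W ⊆ ℝ^{n_w} be sets, let x_ss : ℝ^{n_u} × ℝ^{n_w} → ℝ^{n_x} satisfy ‖x_ss(u,w) − x_ss(u',w)‖ ≤ ℓ_x‖u − u'‖ for all u, u' ∈ U and w ∈ W, let V : ℝ^{n_x} × U × W → ℝ satisfy α₁‖x − x_ss(u,w)‖² ≤ V(x,u,w) ≤ α₂‖x − x_ss(u,w)‖² for all x, u ∈ U, w ∈ W, and let σ_c : ℝ_{≥0} → ℝ_{≥0} be a K-function. Let x^k, x^{k+1} ∈ ℝ^{n_x}, u^k, u^{k+1} ∈ U, w^k, w^{k+1} ∈ W, and z^k ≥ 0 be such that for every fixed u ∈ U, V(x^{k+1}, u, w^{k+1}) ≤ e^{-μτ} V(x^k, u, w^k) + τ·σ_c(z^k). Then, with W(x,u,w) := √(V(x,u,w)), c_W := √(α₂/α₁)·e^{-τμ/2},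 and ℓ_W := √α₁·ℓ_x, it holds that W(x^{k+1}, u^{k+1}, w^{k+1}) ≤ c_W·W(x^k, u^k, w^k) + c_W·ℓ_W·‖u^{k+1} − u^k‖ + √τ·√(σ_c(z^k)). -/
/-- A `K`-function: continuous, strictly increasing on `[0,∞)` and vanishing at `0`. -/
def IsKFunction (γ : ℝ → ℝ) : Prop :=
  ContinuousOn γ (Set.Ici 0) ∧ StrictMonoOn γ (Set.Ici 0) ∧ γ 0 = 0

/-!
Apply the decay estimate at the fixed input `u = uᵏ⁺¹` and take square roots, using
`√(a + b) ≤ √a + √b`: this bounds `W(xᵏ⁺¹, uᵏ⁺¹, wᵏ⁺¹)` by `e^{-τμ/2} W(xᵏ, uᵏ⁺¹, wᵏ)` plus the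
disturbance term. It remains to compare `W(xᵏ, uᵏ⁺¹, wᵏ)` with `W(xᵏ, uᵏ, wᵏ)`: the upper quadratic
bound at `uᵏ⁺¹`, the triangle inequality through `x_ss(uᵏ, wᵏ)`, the Lipschitz bound on `x_ss` and
the lower quadratic bound at `uᵏ` give `W(xᵏ, uᵏ⁺¹, wᵏ) ≤ √(α₂/α₁) (W(xᵏ, uᵏ, wᵏ) + ℓ_W ‖uᵏ⁺¹ - uᵏ‖)`.
-/

open Real

namespace Real

lemma sqrt_add_le_add_sqrt (x y : ℝ) : √(x + y) ≤ √x + √y := by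
  rw [sqrt_le_iff]
  refine ⟨by positivity, ?_⟩
  nlinarith [sq_sqrt' (x := x), sq_sqrt' (x := y), le_max_left x 0, le_max_left y 0,
    sqrt_nonneg x, sqrt_nonneg y]

lemma sqrt_le_sqrt_mul_add_sqrt_mul_of_le {a b x y v : ℝ} (ha : 0 ≤ a) (hb : 0 ≤ b)
    (hv : v ≤ a * x + b * y) : √v ≤ √a * √x + √b * √y :=
  calc √v ≤ √(a * x + b * y) := sqrt_le_sqrt hv
    _ ≤ √(a * x) + √(b * y) := sqrt_add_le_add_sqrt _ _
    _ = √a * √x + √b * √y := by rw [sqrt_mul ha, sqrt_mul hb]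

lemma sqrt_mul_le_sqrt_of_mul_sq_le {a r v : ℝ} (hr : 0 ≤ r) (h : a * r ^ 2 ≤ v) :
    √a * r ≤ √v := by
  simpa only [sqrt_mul' a (sq_nonneg r), sqrt_sq hr] using sqrt_le_sqrt h

lemma sqrt_le_sqrt_mul_of_le_mul_sq {a r v : ℝ} (hr : 0 ≤ r) (h : v ≤ a * r ^ 2) :
    √v ≤ √a * r := by
  simpa only [sqrt_mul' a (sq_nonneg r), sqrt_sq hr] using sqrt_le_sqrt h

end Real

lemma sqrt_le_of_sq_norm_sandwich {E : Type*} [SeminormedAddGroup E] {α₁ α₂ v v' δ : ℝ}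
    {x c c' : E} (hα₁ : 0 < α₁) (hv : α₁ * ‖x - c‖ ^ 2 ≤ v) (hv' : v' ≤ α₂ * ‖x - c'‖ ^ 2)
    (hc : ‖c - c'‖ ≤ δ) :
    √v' ≤ √(α₂ / α₁) * (√v + √α₁ * δ) := by
  have hα : √α₂ = √(α₂ / α₁) * √α₁ := by
    rw [sqrt_div' _ hα₁.le, div_mul_cancel₀ _ (sqrt_pos.mpr hα₁).ne']
  calc √v' ≤ √α₂ * ‖x - c'‖ := sqrt_le_sqrt_mul_of_le_mul_sq (norm_nonneg _) hv'
    _ ≤ √α₂ * (‖x - c‖ + δ) := by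
        gcongr
        exact (norm_sub_le_norm_sub_add_norm_sub x c c').trans (by gcongr)
    _ = √(α₂ / α₁) * (√α₁ * ‖x - c‖ + √α₁ * δ) := by rw [hα]; ring
    _ ≤ √(α₂ / α₁) * (√v + √α₁ * δ) := by
        gcongr
        exact sqrt_mul_le_sqrt_of_mul_sq_le (norm_nonneg _) hv

theorem stmt1_general {nx nu nw : ℕ}
    (α₁ α₂ μ τ ℓx : ℝ) (hα₁ : 0 < α₁) (hτ : 0 < τ)
    (U : Set (EuclideanSpace ℝ (Fin nu))) (Wd : Set (EuclideanSpace ℝ (Fin nw)))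
    (xss : EuclideanSpace ℝ (Fin nu) → EuclideanSpace ℝ (Fin nw) → EuclideanSpace ℝ (Fin nx))
    (hxss : ∀ u ∈ U, ∀ u' ∈ U, ∀ w ∈ Wd, ‖xss u w - xss u' w‖ ≤ ℓx * ‖u - u'‖)
    (V : EuclideanSpace ℝ (Fin nx) → EuclideanSpace ℝ (Fin nu) → EuclideanSpace ℝ (Fin nw) → ℝ)
    (hV : ∀ x, ∀ u ∈ U, ∀ w ∈ Wd,
      α₁ * ‖x - xss u w‖^2 ≤ V x u w ∧ V x u w ≤ α₂ * ‖x - xss u w‖^2)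
    (σc : ℝ → ℝ)
    (xk xk1 : EuclideanSpace ℝ (Fin nx))
    (uk uk1 : EuclideanSpace ℝ (Fin nu)) (huk : uk ∈ U) (huk1 : uk1 ∈ U)
    (wk wk1 : EuclideanSpace ℝ (Fin nw)) (hwk : wk ∈ Wd)
    (zk : ℝ)
    (hdecay : ∀ u ∈ U, V xk1 u wk1 ≤ Real.exp (-(μ*τ)) * V xk u wk + τ * σc zk) :
    Real.sqrt (V xk1 uk1 wk1) ≤
      (Real.sqrt (α₂/α₁) * Real.exp (-(τ*μ)/2)) * Real.sqrt (V xk uk wk)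
        + (Real.sqrt (α₂/α₁) * Real.exp (-(τ*μ)/2)) * (Real.sqrt α₁ * ℓx) * ‖uk1 - uk‖
        + Real.sqrt τ * Real.sqrt (σc zk) := by
  have hstep := sqrt_le_sqrt_mul_add_sqrt_mul_of_le (exp_pos _).le hτ.le (hdecay uk1 huk1)
  rw [← exp_half, mul_comm μ τ] at hstep
  have hinput : √(V xk uk1 wk) ≤ √(α₂ / α₁) * (√(V xk uk wk) + √α₁ * (ℓx * ‖uk1 - uk‖)) :=
    sqrt_le_of_sq_norm_sandwich hα₁ (hV xk uk huk wk hwk).1 (hV xk uk1 huk1 wk hwk).2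
      (norm_sub_rev uk1 uk ▸ hxss uk huk uk1 huk1 wk hwk)
  calc √(V xk1 uk1 wk1)
      ≤ exp (-(τ * μ) / 2) * √(V xk uk1 wk) + √τ * √(σc zk) := hstep
    _ ≤ exp (-(τ * μ) / 2) * (√(α₂ / α₁) * (√(V xk uk wk) + √α₁ * (ℓx * ‖uk1 - uk‖)))
          + √τ * √(σc zk) := by gcongr
    _ = _ := by ring

/-- **Lemma 1** (discrete-time content): one-step decay bound for `W = √V`. -/
theorem stmt1 {nx nu nw : ℕ}
    (α₁ α₂ μ τ ℓx : ℝ) (hα₁ : 0 < α₁) (hα : α₁ ≤ α₂) (hμ : 0 < μ) (hτ : 0 < τ) (hℓx : 0 < ℓx)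
    (U : Set (EuclideanSpace ℝ (Fin nu))) (Wd : Set (EuclideanSpace ℝ (Fin nw)))
    (xss : EuclideanSpace ℝ (Fin nu) → EuclideanSpace ℝ (Fin nw) → EuclideanSpace ℝ (Fin nx))
    (hxss : ∀ u ∈ U, ∀ u' ∈ U, ∀ w ∈ Wd, ‖xss u w - xss u' w‖ ≤ ℓx * ‖u - u'‖)
    (V : EuclideanSpace ℝ (Fin nx) → EuclideanSpace ℝ (Fin nu) → EuclideanSpace ℝ (Fin nw) → ℝ)
    (hV : ∀ x, ∀ u ∈ U, ∀ w ∈ Wd,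
      α₁ * ‖x - xss u w‖^2 ≤ V x u w ∧ V x u w ≤ α₂ * ‖x - xss u w‖^2)
    (σc : ℝ → ℝ) (hσc : IsKFunction σc)
    (xk xk1 : EuclideanSpace ℝ (Fin nx))
    (uk uk1 : EuclideanSpace ℝ (Fin nu)) (huk : uk ∈ U) (huk1 : uk1 ∈ U)
    (wk wk1 : EuclideanSpace ℝ (Fin nw)) (hwk : wk ∈ Wd) (hwk1 : wk1 ∈ Wd)
    (zk : ℝ) (hzk : 0 ≤ zk)
    (hdecay : ∀ u ∈ U, V xk1 u wk1 ≤ Real.exp (-(μ*τ)) * V xk u wk + τ * σc zk) :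
    Real.sqrt (V xk1 uk1 wk1) ≤
      (Real.sqrt (α₂/α₁) * Real.exp (-(τ*μ)/2)) * Real.sqrt (V xk uk wk)
        + (Real.sqrt (α₂/α₁) * Real.exp (-(τ*μ)/2)) * (Real.sqrt α₁ * ℓx) * ‖uk1 - uk‖
        + Real.sqrt τ * Real.sqrt (σc zk) :=
  stmt1_general α₁ α₂ μ τ ℓx hα₁ hτ U Wd xss hxss V hV σc xk xk1 uk uk1 huk huk1 wk wk1 hwk zk
    hdecay
end

section
/- Let η₁ > 0, c_M ∈ [0,1), let γ : ℝ_{≥0} → ℝ_{≥0} be continuous and nondecreasing with γ(0) = 0, let ℓ_g, ℓ_x > 0, and let (δx^k), (δu^k), (δy^k), (z^k) be sequences with z^k ≥ 0 bounded, (‖(δx^k, δu^k)‖) bounded, such that: (i) ‖δy^k‖ ≤ ℓ_g(1 + ℓ_x)·‖(δx^k, δu^k)‖ for all k, and (ii) for all k₀ ≤ k, ‖(δx^k, δu^k)‖ ≤ η₁·c_M^{k − k₀}·‖(δx^{k₀}, δu^{k₀})‖ + γ(sup_{k₀ ≤ s ≤ k−1} z^s). Then limsup_{k→∞} ‖δy^k‖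 ≤ γ_a(limsup_{k→∞} z^k), where γ_a(ζ) := ℓ_g(1 + ℓ_x)·γ(ζ). -/
/-!
Fix a level `t` above `limsup z`. From some index `k₀` on, every `z s` is below `t`, so restarting
the ISS estimate at `k₀` bounds the state error at step `k` by `η₁ cM^(k-k₀)` times the error at
`k₀`, plus `γ t`; the first term decays geometrically. Hence the output error has limsup at most
`ℓg (1 + ℓx) γ t`, and letting `t ↓ limsup z` the right-continuity of `γ` gives the claim.
-/

open Filter Set Topology

theorem map_sSup_image_le_of_forall_le {ι : Type*} {z : ι → ℝ} {γ : ℝ → ℝ}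
    (hγm : MonotoneOn γ (Ici 0)) {S : Set ι} (hz0 : ∀ s ∈ S, 0 ≤ z s) {t : ℝ}
    (ht0 : 0 ≤ t) (hzt : ∀ s ∈ S, z s ≤ t) :
    γ (sSup (z '' S)) ≤ γ t :=
  hγm (Real.sSup_nonneg (forall_mem_image.2 hz0)) ht0
    (Real.sSup_le (forall_mem_image.2 hzt) ht0)

theorem Filter.limsup_le_of_le_of_tendsto {α : Type*} {f : Filter α} [f.NeBot]
    {u g : α → ℝ} {a : ℝ} (hu : IsCoboundedUnder (· ≤ ·) f u) (hug : ∀ᶠ k in f, u k ≤ g k)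
    (hg : Tendsto g f (𝓝 a)) :
    limsup u f ≤ a :=
  (limsup_le_limsup hug hu hg.isBoundedUnder_le).trans_eq hg.limsup_eq

section RestartedISS

variable {ξ z y : ℕ → ℝ} {γ : ℝ → ℝ} {η cM C : ℝ}

theorem le_of_iss_of_forall_ge (hz0 : ∀ k, 0 ≤ z k) (hγm : MonotoneOn γ (Ici 0))
    (hISS : ∀ k₀ k : ℕ, k₀ ≤ k → ξ k ≤ η * cM ^ (k - k₀) * ξ k₀ + γ (sSup (z '' Ico k₀ k)))
    {t : ℝ} (ht0 : 0 ≤ t) {k₀ : ℕ} (hzt : ∀ s ≥ k₀, z s ≤ t) {k : ℕ} (hk : k₀ ≤ k) :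
    ξ k ≤ η * cM ^ (k - k₀) * ξ k₀ + γ t := by
  refine (hISS k₀ k hk).trans (add_le_add_right ?_ _)
  exact map_sSup_image_le_of_forall_le hγm (fun s _ ↦ hz0 s) ht0 fun s hs ↦ hzt s hs.1

theorem limsup_le_mul_of_iss_of_limsup_lt (hcM0 : 0 ≤ cM) (hcM1 : cM < 1) (hC : 0 ≤ C)
    (hy0 : ∀ k, 0 ≤ y k) (hy : ∀ k, y k ≤ C * ξ k)
    (hz0 : ∀ k, 0 ≤ z k) (hzb : IsBoundedUnder (· ≤ ·) atTop z) (hγm : MonotoneOn γ (Ici 0))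
    (hISS : ∀ k₀ k : ℕ, k₀ ≤ k → ξ k ≤ η * cM ^ (k - k₀) * ξ k₀ + γ (sSup (z '' Ico k₀ k)))
    {t : ℝ} (ht0 : 0 ≤ t) (ht : limsup z atTop < t) :
    limsup y atTop ≤ C * γ t := by
  obtain ⟨k₀, hzt⟩ := eventually_atTop.1 (eventually_lt_of_limsup_lt ht hzb)
  have hdecay : Tendsto (fun k ↦ cM ^ (k - k₀)) atTop (𝓝 0) :=
    (tendsto_pow_atTop_nhds_zero_of_lt_one hcM0 hcM1).comp (tendsto_sub_atTop_nat k₀)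
  refine limsup_le_of_le_of_tendsto (g := fun k ↦ C * (η * cM ^ (k - k₀) * ξ k₀ + γ t))
    (isBoundedUnder_of ⟨0, hy0⟩).isCoboundedUnder_le ?_ ?_
  · filter_upwards [eventually_ge_atTop k₀] with k hk
    exact (hy k).trans <| mul_le_mul_of_nonneg_left
      (le_of_iss_of_forall_ge hz0 hγm hISS ht0 (fun s hs ↦ (hzt s hs).le) hk) hC
  · simpa using ((hdecay.const_mul η).mul_const (ξ k₀)).add_const (γ t) |>.const_mul C

end RestartedISS

theorem stmt5_general {E F G : Type*}
    [NormedAddCommGroup E] [NormedAddCommGroup F] [NormedAddCommGroup G]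
    (η₁ cM ℓg ℓx : ℝ) (hcM0 : 0 ≤ cM) (hcM1 : cM < 1)
    (hℓg : 0 < ℓg) (hℓx : 0 < ℓx)
    (γ : ℝ → ℝ) (hγc : ContinuousOn γ (Set.Ici 0)) (hγm : MonotoneOn γ (Set.Ici 0))
    (δx : ℕ → E) (δu : ℕ → F) (δy : ℕ → G) (z : ℕ → ℝ)
    (hz0 : ∀ k, 0 ≤ z k) (hzb : ∃ B, ∀ k, z k ≤ B)
    (hy : ∀ k, ‖δy k‖ ≤ ℓg * (1 + ℓx) * Real.sqrt (‖δx k‖^2 + ‖δu k‖^2))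
    (hISS : ∀ k₀ k : ℕ, k₀ ≤ k →
      Real.sqrt (‖δx k‖^2 + ‖δu k‖^2) ≤
        η₁ * cM^(k - k₀) * Real.sqrt (‖δx k₀‖^2 + ‖δu k₀‖^2)
          + γ (sSup (z '' Set.Ico k₀ k))) :
    Filter.limsup (fun k => ‖δy k‖) atTop ≤
      ℓg * (1 + ℓx) * γ (Filter.limsup z atTop) := by
  have hz_bdd : IsBoundedUnder (· ≤ ·) atTop z := isBoundedUnder_of hzb
  have hL0 : 0 ≤ limsup z atTop :=
    le_limsup_of_frequently_le (Frequently.of_forall hz0) hz_bdd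
  have hγ_right : ContinuousWithinAt (fun t ↦ ℓg * (1 + ℓx) * γ t) (Ioi (limsup z atTop))
      (limsup z atTop) :=
    ((hγc _ hL0).mono fun t ht ↦ hL0.trans ht.le).const_mul _
  refine ge_of_tendsto hγ_right (eventually_nhdsWithin_of_forall fun t ht ↦ ?_)
  exact limsup_le_mul_of_iss_of_limsup_lt hcM0 hcM1 (by positivity) (fun k ↦ norm_nonneg _) hy
    hz0 hz_bdd hγm hISS (hL0.trans ht.le) ht

/-- **Corollary 1**: under the restarted ISS estimate and the per-step output error bound,
the asymptotic output tracking error is bounded by the asymptotic gain `γ_a = ℓ_g(1+ℓ_x)·γ`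
applied to the asymptotic disturbance rate. -/
theorem stmt5 {E F G : Type*}
    [NormedAddCommGroup E] [NormedAddCommGroup F] [NormedAddCommGroup G]
    (η₁ cM ℓg ℓx : ℝ) (hη₁ : 0 < η₁) (hcM0 : 0 ≤ cM) (hcM1 : cM < 1)
    (hℓg : 0 < ℓg) (hℓx : 0 < ℓx)
    (γ : ℝ → ℝ) (hγc : ContinuousOn γ (Set.Ici 0)) (hγm : MonotoneOn γ (Set.Ici 0))
    (hγ0 : γ 0 = 0)
    (δx : ℕ → E) (δu : ℕ → F) (δy : ℕ → G) (z : ℕ → ℝ)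
    (hz0 : ∀ k, 0 ≤ z k) (hzb : ∃ B, ∀ k, z k ≤ B)
    (hξb : ∃ B, ∀ k, Real.sqrt (‖δx k‖^2 + ‖δu k‖^2) ≤ B)
    (hy : ∀ k, ‖δy k‖ ≤ ℓg * (1 + ℓx) * Real.sqrt (‖δx k‖^2 + ‖δu k‖^2))
    (hISS : ∀ k₀ k : ℕ, k₀ ≤ k →
      Real.sqrt (‖δx k‖^2 + ‖δu k‖^2) ≤
        η₁ * cM^(k - k₀) * Real.sqrt (‖δx k₀‖^2 + ‖δu k₀‖^2)
          + γ (sSup (z '' Set.Ico k₀ k))) :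
    Filter.limsup (fun k => ‖δy k‖) atTop ≤
      ℓg * (1 + ℓx) * γ (Filter.limsup z atTop) :=
  stmt5_general η₁ cM ℓg ℓx hcM0 hcM1 hℓg hℓx γ hγc hγm δx δu δy z hz0 hzb hy hISS
end

section
/- Let P be a symmetric positive definite n_u × n_u matrix with eigenvalue bounds λmin(P), λmax(P), and ‖a‖_P := √(aᵀPa). Let ε ∈ (0,1], c_T ∈ (0,1), ℓ_T, ℓ_g, ℓ_{u*} > 0, α₁ > 0, and let: T : ℝ^{n_u} × ℝ^{n_y} → ℝ^{n_u} with ‖T(u,y) − T(u,y')‖ ≤ ℓ_T‖y − y'‖; g with ‖g(x,w) − g(x',w)‖ ≤ ℓ_g‖x − x'‖; h(u,w) := g(x_ss(u,w), w); u* with u*(w) = (1−ε)u*(w) + ε·T(u*(w), h(u*(w), w)), ‖(1−ε)u + ε·T(u, h(u,w)) − u*(w)‖_P ≤ φ(ε)·‖u − u*(w)‖_P where φ(ε) := 1 − ε(1 − c_T), and ‖u*(w') − u*(w)‖ ≤ ℓ_{u*}‖w' − w‖; and V with α₁‖x − x_ss(u,w)‖² ≤ V(x,u,w), W := √V. If u^{k+1}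 = (1−ε)u^k + ε·T(u^k, y^{k+1}) with y^{k+1} = g(x^{k+1}, w^{k+1}), then ‖u^{k+1} − u*(w^{k+1})‖_P ≤ φ(ε)·‖u^k − u*(w^k)‖_P + φ(ε)·√(λmax(P))·ℓ_{u*}·‖w^{k+1} − w^k‖ + ε·(√(λmax(P))·ℓ_T·ℓ_g/√α₁)·W(x^{k+1}, u^k, w^{k+1}). -/
/-- The `P`-weighted norm `‖a‖_P = √(aᵀ P a)`. -/
noncomputable def pnorm {n : ℕ} (P : Matrix (Fin n) (Fin n) ℝ) (a : EuclideanSpace ℝ (Fin n)) : ℝ :=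
  Real.sqrt (dotProduct (fun i => a i) (P.mulVec fun i => a i))

/-!
Write `u^{k+1} - u*(w^{k+1})` as the error of one exact relaxed step from `u^k` at the disturbance
`w^{k+1}`, plus `ε` times the mismatch between `T` evaluated at the measured output
`g(x^{k+1}, w^{k+1})` and at the steady-state output `h(u^k, w^{k+1})`. The first term contracts by
`φ(ε)` towards `u*(w^{k+1})`, which differs from `u*(w^k)` by at most `ℓ_{u*} ‖w^{k+1} - w^k‖`; the
mismatch is at most `ℓ_T ℓ_g ‖x^{k+1} - x_ss‖ ≤ ℓ_T ℓ_g W / √α₁`. Euclidean norms enter the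
`P`-norm through `‖a‖_P ≤ √λmax(P) ‖a‖`, a consequence of `P ≤ λmax(P) • 1` in the Loewner order.
-/

open Matrix
open scoped MatrixOrder

section WeightedNorm

variable {n : ℕ} {P : Matrix (Fin n) (Fin n) ℝ}

theorem Matrix.IsHermitian.le_algebraMap_eigMax (hP : P.IsHermitian) :
    P ≤ algebraMap ℝ _ (eigMax hP) :=
  le_algebraMap_of_spectrum_le fun x hx => by
    obtain ⟨i, rfl⟩ := hP.spectrum_real_eq_range_eigenvalues ▸ hx
    exact le_ciSup (Set.finite_range _).bddAbove i

theorem Matrix.IsHermitian.dotProduct_mulVec_le_eigMax_mul_sq_norm (hP : P.IsHermitian)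
    (a : EuclideanSpace ℝ (Fin n)) :
    dotProduct (fun i => a i) (P.mulVec fun i => a i) ≤ eigMax hP * ‖a‖ ^ 2 := by
  have h := (le_iff.mp hP.le_algebraMap_eigMax).dotProduct_mulVec_nonneg (fun i => a i)
  rw [← real_inner_self_eq_norm_sq, EuclideanSpace.inner_eq_star_dotProduct]
  simpa [Algebra.algebraMap_eq_smul_one, sub_mulVec, dotProduct_sub, smul_mulVec] using h

theorem pnorm_le_sqrt_eigMax_mul_norm (hP : P.IsHermitian) (a : EuclideanSpace ℝ (Fin n)) :
    pnorm P a ≤ √(eigMax hP) * ‖a‖ := by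
  rw [pnorm, ← Real.sqrt_sq (norm_nonneg a), ← Real.sqrt_mul' _ (sq_nonneg _)]
  exact Real.sqrt_le_sqrt (hP.dotProduct_mulVec_le_eigMax_mul_sq_norm a)

theorem pnorm_eq_norm_toSeminormedAddCommGroup (hP : P.PosSemidef)
    (a : EuclideanSpace ℝ (Fin n)) :
    pnorm P a = @norm _ (P.toSeminormedAddCommGroup hP).toNorm (WithLp.ofLp a) := by
  rw [pnorm, dotProduct_comm]
  rfl

theorem pnorm_add_le (hP : P.PosSemidef) (a b : EuclideanSpace ℝ (Fin n)) :
    pnorm P (a + b) ≤ pnorm P a + pnorm P b := by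
  simp only [pnorm_eq_norm_toSeminormedAddCommGroup hP, WithLp.ofLp_add]
  exact @norm_add_le _ (P.toSeminormedAddCommGroup hP).toSeminormedAddGroup _ _

theorem pnorm_sub_le_add (hP : P.PosSemidef) (a b c : EuclideanSpace ℝ (Fin n)) :
    pnorm P (a - c) ≤ pnorm P (a - b) + pnorm P (b - c) := by
  simpa using pnorm_add_le hP (a - b) (b - c)

end WeightedNorm

theorem le_sqrt_div_sqrt_of_mul_sq_le {α V r : ℝ} (hα : 0 < α) (hr : 0 ≤ r)
    (h : α * r ^ 2 ≤ V) : r ≤ √V / √α := by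
  rw [← Real.sqrt_div' V hα.le, ← Real.sqrt_sq hr]
  exact Real.sqrt_le_sqrt ((le_div_iff₀' hα).2 h)

theorem stmt6_general {nx nu nw ny : ℕ}
    (P : Matrix (Fin nu) (Fin nu) ℝ) (hP : P.PosDef)
    (ε cT ℓT ℓg ℓus α₁ : ℝ)
    (hε0 : 0 < ε) (hε1 : ε ≤ 1) (hcT : cT ∈ Set.Ioo (0:ℝ) 1)
    (hℓT : 0 < ℓT) (hℓg : 0 < ℓg) (hα₁ : 0 < α₁)
    (T : EuclideanSpace ℝ (Fin nu) → EuclideanSpace ℝ (Fin ny) → EuclideanSpace ℝ (Fin nu))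
    (hT : ∀ u y y', ‖T u y - T u y'‖ ≤ ℓT * ‖y - y'‖)
    (g : EuclideanSpace ℝ (Fin nx) → EuclideanSpace ℝ (Fin nw) → EuclideanSpace ℝ (Fin ny))
    (hg : ∀ x x' w, ‖g x w - g x' w‖ ≤ ℓg * ‖x - x'‖)
    (xss : EuclideanSpace ℝ (Fin nu) → EuclideanSpace ℝ (Fin nw) → EuclideanSpace ℝ (Fin nx))
    (ustar : EuclideanSpace ℝ (Fin nw) → EuclideanSpace ℝ (Fin nu))
    (hcontr : ∀ u w,
      pnorm P ((1-ε) • u + ε • T u (g (xss u w) w) - ustar w) ≤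
        (1 - ε*(1 - cT)) * pnorm P (u - ustar w))
    (hustarLip : ∀ w w', ‖ustar w' - ustar w‖ ≤ ℓus * ‖w' - w‖)
    (V : EuclideanSpace ℝ (Fin nx) → EuclideanSpace ℝ (Fin nu) → EuclideanSpace ℝ (Fin nw) → ℝ)
    (hV : ∀ x u w, α₁ * ‖x - xss u w‖^2 ≤ V x u w)
    (xk1 : EuclideanSpace ℝ (Fin nx)) (uk uk1 : EuclideanSpace ℝ (Fin nu))
    (wk wk1 : EuclideanSpace ℝ (Fin nw))
    (hupd : uk1 = (1-ε) • uk + ε • T uk (g xk1 wk1)) :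
    pnorm P (uk1 - ustar wk1) ≤
      (1 - ε*(1 - cT)) * pnorm P (uk - ustar wk)
        + (1 - ε*(1 - cT)) * Real.sqrt (eigMax hP.1) * ℓus * ‖wk1 - wk‖
        + ε * (Real.sqrt (eigMax hP.1) * ℓT * ℓg / Real.sqrt α₁) *
            Real.sqrt (V xk1 uk wk1) := by
  set L := √(eigMax hP.1)
  have hφ : 0 ≤ 1 - ε * (1 - cT) := by nlinarith [hcT.1]
  set Δ := T uk (g xk1 wk1) - T uk (g (xss uk wk1) wk1)
  have hsplit : uk1 - ustar wk1 =
      ((1 - ε) • uk + ε • T uk (g (xss uk wk1) wk1) - ustar wk1) + ε • Δ := by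
    rw [hupd, smul_sub]; abel
  have hdrift : pnorm P (uk - ustar wk1) ≤ pnorm P (uk - ustar wk) + L * ℓus * ‖wk1 - wk‖ :=
    calc pnorm P (uk - ustar wk1)
        ≤ pnorm P (uk - ustar wk) + pnorm P (ustar wk - ustar wk1) :=
          pnorm_sub_le_add hP.posSemidef _ _ _
      _ ≤ pnorm P (uk - ustar wk) + L * ‖ustar wk1 - ustar wk‖ := by
          rw [norm_sub_rev]; gcongr; exact pnorm_le_sqrt_eigMax_mul_norm hP.1 _
      _ ≤ pnorm P (uk - ustar wk) + L * ℓus * ‖wk1 - wk‖ := by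
          rw [mul_assoc]; gcongr; exact hustarLip wk wk1
  have hΔ : ‖Δ‖ ≤ ℓT * ℓg * (√(V xk1 uk wk1) / √α₁) :=
    calc ‖Δ‖ ≤ ℓT * ‖g xk1 wk1 - g (xss uk wk1) wk1‖ := hT _ _ _
      _ ≤ ℓT * (ℓg * ‖xk1 - xss uk wk1‖) := by gcongr; exact hg _ _ _
      _ ≤ ℓT * ℓg * (√(V xk1 uk wk1) / √α₁) := by
          rw [← mul_assoc]; gcongr
          exact le_sqrt_div_sqrt_of_mul_sq_le hα₁ (norm_nonneg _) (hV xk1 uk wk1)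
  calc pnorm P (uk1 - ustar wk1)
      ≤ pnorm P ((1 - ε) • uk + ε • T uk (g (xss uk wk1) wk1) - ustar wk1) + pnorm P (ε • Δ) :=
        hsplit ▸ pnorm_add_le hP.posSemidef _ _
    _ ≤ (1 - ε * (1 - cT)) * pnorm P (uk - ustar wk1) + L * ‖ε • Δ‖ :=
        add_le_add (hcontr uk wk1) (pnorm_le_sqrt_eigMax_mul_norm hP.1 _)
    _ ≤ (1 - ε * (1 - cT)) * (pnorm P (uk - ustar wk) + L * ℓus * ‖wk1 - wk‖)
          + L * (ε * (ℓT * ℓg * (√(V xk1 uk wk1) / √α₁))) := by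
        rw [norm_smul, Real.norm_of_nonneg hε0.le]; gcongr
    _ = _ := by ring

/-- The one-step input-tracking-error inequality (chain (29), up to step (s.4)) in the proof
of Theorem 1. -/
theorem stmt6 {nx nu nw ny : ℕ} (hnu : 0 < nu)
    (P : Matrix (Fin nu) (Fin nu) ℝ) (hP : P.PosDef)
    (ε cT ℓT ℓg ℓus α₁ : ℝ)
    (hε0 : 0 < ε) (hε1 : ε ≤ 1) (hcT : cT ∈ Set.Ioo (0:ℝ) 1)
    (hℓT : 0 < ℓT) (hℓg : 0 < ℓg) (hℓus : 0 < ℓus) (hα₁ : 0 < α₁)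
    (T : EuclideanSpace ℝ (Fin nu) → EuclideanSpace ℝ (Fin ny) → EuclideanSpace ℝ (Fin nu))
    (hT : ∀ u y y', ‖T u y - T u y'‖ ≤ ℓT * ‖y - y'‖)
    (g : EuclideanSpace ℝ (Fin nx) → EuclideanSpace ℝ (Fin nw) → EuclideanSpace ℝ (Fin ny))
    (hg : ∀ x x' w, ‖g x w - g x' w‖ ≤ ℓg * ‖x - x'‖)
    (xss : EuclideanSpace ℝ (Fin nu) → EuclideanSpace ℝ (Fin nw) → EuclideanSpace ℝ (Fin nx))
    (ustar : EuclideanSpace ℝ (Fin nw) → EuclideanSpace ℝ (Fin nu))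
    (hfix : ∀ w, ustar w = (1-ε) • ustar w + ε • T (ustar w) (g (xss (ustar w) w) w))
    (hcontr : ∀ u w,
      pnorm P ((1-ε) • u + ε • T u (g (xss u w) w) - ustar w) ≤
        (1 - ε*(1 - cT)) * pnorm P (u - ustar w))
    (hustarLip : ∀ w w', ‖ustar w' - ustar w‖ ≤ ℓus * ‖w' - w‖)
    (V : EuclideanSpace ℝ (Fin nx) → EuclideanSpace ℝ (Fin nu) → EuclideanSpace ℝ (Fin nw) → ℝ)
    (hV : ∀ x u w, α₁ * ‖x - xss u w‖^2 ≤ V x u w)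
    (xk1 : EuclideanSpace ℝ (Fin nx)) (uk uk1 : EuclideanSpace ℝ (Fin nu))
    (wk wk1 : EuclideanSpace ℝ (Fin nw))
    (hupd : uk1 = (1-ε) • uk + ε • T uk (g xk1 wk1)) :
    pnorm P (uk1 - ustar wk1) ≤
      (1 - ε*(1 - cT)) * pnorm P (uk - ustar wk)
        + (1 - ε*(1 - cT)) * Real.sqrt (eigMax hP.1) * ℓus * ‖wk1 - wk‖
        + ε * (Real.sqrt (eigMax hP.1) * ℓT * ℓg / Real.sqrt α₁) *
            Real.sqrt (V xk1 uk wk1) :=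
  stmt6_general P hP ε cT ℓT ℓg ℓus α₁ hε0 hε1 hcT hℓT hℓg hα₁ T hT g hg xss ustar hcontr hustarLip
    V hV xk1 uk uk1 wk wk1 hupd
end

section
/- Let (ξ^k) and (z^k) be bounded sequences of nonnegative reals, let η ≥ 0, c ∈ [0,1), and let γ : ℝ_{≥0} → ℝ_{≥0} be continuous and nondecreasing. Suppose that for all nonnegative integers k₀ ≤ k, ξ^k ≤ η·c^{k − k₀}·ξ^{k₀} + γ(sup_{k₀ ≤ s ≤ k−1} z^s) (the supremum over an empty range being 0). Then limsup_{k→∞} ξ^k ≤ γ(limsup_{k→∞} z^k). -/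
/-!
Fix `δ > 0`. Eventually `z k < L + δ`, where `L = limsup z`; restarting the estimate at such a
time `k₀` bounds `ξ k` by a transient `η c^(k - k₀) ξ k₀`, which tends to `0`, plus
`γ (L + δ)`. Hence `limsup ξ ≤ γ (L + δ)` for every `δ > 0`, and right-continuity of `γ` at `L`
gives the claim.
-/

open Filter Set Topology

lemma tendsto_mul_pow_sub_nhds_zero {c : ℝ} (hc0 : 0 ≤ c) (hc1 : c < 1) (a : ℝ) (k₀ : ℕ) :
    Tendsto (fun k : ℕ => a * c ^ (k - k₀)) atTop (𝓝 0) := by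
  have hpow : Tendsto (fun k : ℕ => c ^ (k - k₀)) atTop (𝓝 0) :=
    (tendsto_pow_atTop_nhds_zero_of_lt_one hc0 hc1).comp (tendsto_sub_atTop_nat k₀)
  simpa using hpow.const_mul a

lemma limsup_le_of_eventually_le_add_tendsto_zero {u e : ℕ → ℝ} {b : ℝ}
    (hu : IsBoundedUnder (· ≥ ·) atTop u) (he : Tendsto e atTop (𝓝 0))
    (hle : ∀ᶠ k in atTop, u k ≤ e k + b) : limsup u atTop ≤ b := by
  have hlim : Tendsto (fun k => e k + b) atTop (𝓝 b) := by
    simpa using he.add_const b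
  calc limsup u atTop ≤ limsup (fun k => e k + b) atTop :=
        limsup_le_limsup hle hu.isCoboundedUnder_le hlim.isBoundedUnder_le
    _ = b := hlim.limsup_eq

lemma ContinuousWithinAt.le_of_forall_pos_le_add {γ : ℝ → ℝ} {L x : ℝ}
    (hγ : ContinuousWithinAt γ (Ici L) L) (h : ∀ δ > 0, x ≤ γ (L + δ)) : x ≤ γ L := by
  have hright : Tendsto γ (𝓝[>] L) (𝓝 (γ L)) :=
    hγ.tendsto.mono_left (nhdsWithin_mono L Ioi_subset_Ici_self)
  refine ge_of_tendsto hright (eventually_nhdsWithin_of_forall fun y hy => ?_)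
  simpa using h (y - L) (sub_pos.2 hy)

theorem stmt12_general (ξ z : ℕ → ℝ)
    (hξ0 : ∀ k, 0 ≤ ξ k) (hz0 : ∀ k, 0 ≤ z k)
    (hzb : ∃ B, ∀ k, z k ≤ B)
    (η c : ℝ) (hc0 : 0 ≤ c) (hc1 : c < 1)
    (γ : ℝ → ℝ) (hγc : ContinuousOn γ (Set.Ici 0)) (hγm : MonotoneOn γ (Set.Ici 0))
    (hISS : ∀ k₀ k : ℕ, k₀ ≤ k →
      ξ k ≤ η * c^(k - k₀) * ξ k₀ + γ (sSup (z '' Set.Ico k₀ k))) :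
    Filter.limsup ξ atTop ≤ γ (Filter.limsup z atTop) := by
  set L := limsup z atTop
  have hzbdd : IsBoundedUnder (· ≤ ·) atTop z := isBoundedUnder_of hzb
  have hL0 : 0 ≤ L := le_limsup_of_frequently_le (Frequently.of_forall hz0) hzbdd
  refine ((hγc L hL0).mono (Ici_subset_Ici.2 hL0)).le_of_forall_pos_le_add fun δ hδ => ?_
  have hLδ : 0 ≤ L + δ := by linarith
  obtain ⟨k₀, hk₀⟩ :=
    eventually_atTop.1 (eventually_lt_of_limsup_lt (lt_add_of_pos_right L hδ) hzbdd)
  refine limsup_le_of_eventually_le_add_tendsto_zero (isBoundedUnder_of ⟨0, hξ0⟩)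
    (tendsto_mul_pow_sub_nhds_zero hc0 hc1 (η * ξ k₀) k₀)
    (eventually_atTop.2 ⟨k₀, fun k hk => ?_⟩)
  have hsup_nonneg : 0 ≤ sSup (z '' Ico k₀ k) :=
    Real.sSup_nonneg (by rintro _ ⟨s, -, rfl⟩; exact hz0 s)
  have hsup_le : sSup (z '' Ico k₀ k) ≤ L + δ :=
    Real.sSup_le (by rintro _ ⟨s, hs, rfl⟩; exact (hk₀ s hs.1).le) hLδ
  calc ξ k ≤ η * c ^ (k - k₀) * ξ k₀ + γ (sSup (z '' Ico k₀ k)) := hISS k₀ k hk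
    _ ≤ η * ξ k₀ * c ^ (k - k₀) + γ (L + δ) := by
      rw [mul_right_comm]
      gcongr
      exact hγm hsup_nonneg hLδ hsup_le

/-- The asymptotic-gain argument used in the proof of Corollary 1: a restarted ISS estimate
implies that the limsup of the state error is bounded by `γ` of the limsup of the input. -/
theorem stmt12 (ξ z : ℕ → ℝ)
    (hξ0 : ∀ k, 0 ≤ ξ k) (hz0 : ∀ k, 0 ≤ z k)
    (hξb : ∃ B, ∀ k, ξ k ≤ B) (hzb : ∃ B, ∀ k, z k ≤ B)
    (η c : ℝ) (hη : 0 ≤ η) (hc0 : 0 ≤ c) (hc1 : c < 1)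
    (γ : ℝ → ℝ) (hγc : ContinuousOn γ (Set.Ici 0)) (hγm : MonotoneOn γ (Set.Ici 0))
    (hγ0 : ∀ t ∈ Set.Ici (0:ℝ), 0 ≤ γ t)
    (hISS : ∀ k₀ k : ℕ, k₀ ≤ k →
      ξ k ≤ η * c^(k - k₀) * ξ k₀ + γ (sSup (z '' Set.Ico k₀ k))) :
    Filter.limsup ξ atTop ≤ γ (Filter.limsup z atTop) :=
  stmt12_general ξ z hξ0 hz0 hzb η c hc0 hc1 γ hγc hγm hISS
end
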